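/- arXiv:2002.02259 — 9 statements merged into one kernel-verified Lean document; each statement's English description precedes it below -/
import Mathlib

section
/- Every nonzero third order tensor X in R^{n1×n2×n3} admits a triple decomposition X = ABC with tensors A in R^{n1×r×r}, B in R^{r×n2×r}, C in R^{r×r×n3}, where r = mid{n1,n2,n3} (the middle value of n1,n2,n3). -/
open Matrix

noncomputable def tripleProd {n1 n2 n3 r : ℕ}
    (A : Fin n1 → Fin r → Fin r → ℝ) (B : Fin r → Fin n2 → Fin r → ℝ)
    (C : Fin r → Fin r → Fin n3 → ℝ) : Fin n1 → Fin n2 → Fin n3 → ℝ :=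
  fun i j t => ∑ p : Fin r, ∑ q : Fin r, ∑ s : Fin r, A i q s * B p j s * C p q t

noncomputable def TriRank {n1 n2 n3 : ℕ} (X : Fin n1 → Fin n2 → Fin n3 → ℝ) : ℕ :=
  sInf {r : ℕ | ∃ (A : Fin n1 → Fin r → Fin r → ℝ) (B : Fin r → Fin n2 → Fin r → ℝ)
    (C : Fin r → Fin r → Fin n3 → ℝ), X = tripleProd A B C}

noncomputable def CPRank {n1 n2 n3 : ℕ} (X : Fin n1 → Fin n2 → Fin n3 → ℝ) : ℕ :=
  sInf {r : ℕ | ∃ (A : Fin n1 → Fin r → ℝ) (B : Fin n2 → Fin r → ℝ) (C : Fin n3 → Fin r → ℝ),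
    X = fun i j t => ∑ p : Fin r, A i p * B j p * C t p}

def mid (a b c : ℕ) : ℕ := max (min a b) (min (max a b) c)

noncomputable def mode1 {m' m n k : ℕ} (U : Matrix (Fin m') (Fin m) ℝ)
    (D : Fin m → Fin n → Fin k → ℝ) : Fin m' → Fin n → Fin k → ℝ :=
  fun i j t => ∑ p : Fin m, U i p * D p j t

noncomputable def mode2 {m n' n k : ℕ} (V : Matrix (Fin n') (Fin n) ℝ)
    (D : Fin m → Fin n → Fin k → ℝ) : Fin m → Fin n' → Fin k → ℝ :=
  fun i j t => ∑ q : Fin n, V j q * D i q t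

noncomputable def mode3 {m n k' k : ℕ} (W : Matrix (Fin k') (Fin k) ℝ)
    (D : Fin m → Fin n → Fin k → ℝ) : Fin m → Fin n → Fin k' → ℝ :=
  fun i j t => ∑ s : Fin k, W t s * D i j s

noncomputable def tucker {n1 n2 n3 r1 r2 r3 : ℕ} (U : Matrix (Fin n1) (Fin r1) ℝ)
    (V : Matrix (Fin n2) (Fin r2) ℝ) (W : Matrix (Fin n3) (Fin r3) ℝ)
    (D : Fin r1 → Fin r2 → Fin r3 → ℝ) : Fin n1 → Fin n2 → Fin n3 → ℝ :=
  mode1 U (mode2 V (mode3 W D))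

def unfold1 {a b c : ℕ} (T : Fin a → Fin b → Fin c → ℝ) : Matrix (Fin a) (Fin b × Fin c) ℝ :=
  fun i jt => T i jt.1 jt.2
def unfold2 {a b c : ℕ} (T : Fin a → Fin b → Fin c → ℝ) : Matrix (Fin b) (Fin a × Fin c) ℝ :=
  fun j it => T it.1 j it.2
def unfold3 {a b c : ℕ} (T : Fin a → Fin b → Fin c → ℝ) : Matrix (Fin c) (Fin a × Fin b) ℝ :=
  fun t ij => T ij.1 ij.2 t

lemma collapse {r : ℕ} (v : ℕ) (hv : v < r) (f : Fin r → ℝ)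
    (h0 : ∀ p : Fin r, (p : ℕ) ≠ v → f p = 0) :
    ∑ p : Fin r, f p = f ⟨v, hv⟩ := by
  apply Finset.sum_eq_single_of_mem _ (Finset.mem_univ _)
  intro b _ hb
  exact h0 b (by simpa [Fin.ext_iff] using hb)

lemma case12 {n1 n2 n3 r : ℕ} (h1 : n1 ≤ r) (h2 : n2 ≤ r)
    (X : Fin n1 → Fin n2 → Fin n3 → ℝ) :
    ∃ (A : Fin n1 → Fin r → Fin r → ℝ) (B : Fin r → Fin n2 → Fin r → ℝ)
      (C : Fin r → Fin r → Fin n3 → ℝ), X = tripleProd A B C := by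
  refine ⟨fun i q s => if (q : ℕ) = (i : ℕ) then 1 else 0,
    fun p j s => if (p : ℕ) = (j : ℕ) ∧ (s : ℕ) = (j : ℕ) then 1 else 0,
    fun p q t => if hq : (q : ℕ) < n1 then
      (if hp : (p : ℕ) < n2 then X ⟨q, hq⟩ ⟨p, hp⟩ t else 0) else 0, ?_⟩
  funext i j t
  have hi : (i : ℕ) < r := lt_of_lt_of_le i.isLt h1
  have hj : (j : ℕ) < r := lt_of_lt_of_le j.isLt h2
  show X i j t = ∑ p : Fin r, ∑ q, ∑ s, _
  rw [collapse (j : ℕ) hj _ (fun p hp => by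
    apply Finset.sum_eq_zero; intro q _; apply Finset.sum_eq_zero; intro s _
    simp [hp])]
  rw [collapse (i : ℕ) hi _ (fun q hq => by
    apply Finset.sum_eq_zero; intro s _; simp [hq])]
  rw [collapse (j : ℕ) hj _ (fun s hs => by simp [hs])]
  simp [i.isLt, j.isLt]

lemma case13 {n1 n2 n3 r : ℕ} (h1 : n1 ≤ r) (h3 : n3 ≤ r)
    (X : Fin n1 → Fin n2 → Fin n3 → ℝ) :
    ∃ (A : Fin n1 → Fin r → Fin r → ℝ) (B : Fin r → Fin n2 → Fin r → ℝ)
      (C : Fin r → Fin r → Fin n3 → ℝ), X = tripleProd A B C := by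
  refine ⟨fun i q s => if (s : ℕ) = (i : ℕ) then 1 else 0,
    fun p j s => if hs : (s : ℕ) < n1 then
      (if hp : (p : ℕ) < n3 then X ⟨s, hs⟩ j ⟨p, hp⟩ else 0) else 0,
    fun p q t => if (p : ℕ) = (t : ℕ) ∧ (q : ℕ) = (t : ℕ) then 1 else 0, ?_⟩
  funext i j t
  have hi : (i : ℕ) < r := lt_of_lt_of_le i.isLt h1
  have ht : (t : ℕ) < r := lt_of_lt_of_le t.isLt h3
  show X i j t = ∑ p : Fin r, ∑ q, ∑ s, _
  rw [collapse (t : ℕ) ht _ (fun p hp => by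
    apply Finset.sum_eq_zero; intro q _; apply Finset.sum_eq_zero; intro s _
    simp [hp])]
  rw [collapse (t : ℕ) ht _ (fun q hq => by
    apply Finset.sum_eq_zero; intro s _; simp [hq])]
  rw [collapse (i : ℕ) hi _ (fun s hs => by simp [hs])]
  simp [i.isLt, t.isLt]

lemma case23 {n1 n2 n3 r : ℕ} (h2 : n2 ≤ r) (h3 : n3 ≤ r)
    (X : Fin n1 → Fin n2 → Fin n3 → ℝ) :
    ∃ (A : Fin n1 → Fin r → Fin r → ℝ) (B : Fin r → Fin n2 → Fin r → ℝ)
      (C : Fin r → Fin r → Fin n3 → ℝ), X = tripleProd A B C := by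
  refine ⟨fun i q s => if hq : (q : ℕ) < n3 then
      (if hs : (s : ℕ) < n2 then X i ⟨s, hs⟩ ⟨q, hq⟩ else 0) else 0,
    fun p j s => if (s : ℕ) = (j : ℕ) then 1 else 0,
    fun p q t => if (p : ℕ) = (t : ℕ) ∧ (q : ℕ) = (t : ℕ) then 1 else 0, ?_⟩
  funext i j t
  have hj : (j : ℕ) < r := lt_of_lt_of_le j.isLt h2
  have ht : (t : ℕ) < r := lt_of_lt_of_le t.isLt h3
  show X i j t = ∑ p : Fin r, ∑ q, ∑ s, _
  rw [collapse (t : ℕ) ht _ (fun p hp => by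
    apply Finset.sum_eq_zero; intro q _; apply Finset.sum_eq_zero; intro s _
    simp [hp])]
  rw [collapse (t : ℕ) ht _ (fun q hq => by
    apply Finset.sum_eq_zero; intro s _; simp [hq])]
  rw [collapse (j : ℕ) hj _ (fun s hs => by simp [hs])]
  simp [j.isLt, t.isLt]

theorem stmt0 {n1 n2 n3 : ℕ} (X : Fin n1 → Fin n2 → Fin n3 → ℝ) (hX : X ≠ 0) :
    ∃ (A : Fin n1 → Fin (mid n1 n2 n3) → Fin (mid n1 n2 n3) → ℝ)
      (B : Fin (mid n1 n2 n3) → Fin n2 → Fin (mid n1 n2 n3) → ℝ)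
      (C : Fin (mid n1 n2 n3) → Fin (mid n1 n2 n3) → Fin n3 → ℝ),
      X = tripleProd A B C := by
  have hmid : (n1 ≤ mid n1 n2 n3 ∧ n2 ≤ mid n1 n2 n3) ∨
      (n1 ≤ mid n1 n2 n3 ∧ n3 ≤ mid n1 n2 n3) ∨
      (n2 ≤ mid n1 n2 n3 ∧ n3 ≤ mid n1 n2 n3) := by
    simp only [mid]; omega
  rcases hmid with ⟨h1, h2⟩ | ⟨h1, h3⟩ | ⟨h2, h3⟩
  · exact case12 h1 h2 X
  · exact case13 h1 h3 X
  · exact case23 h2 h3 X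
end

section
/- If X in R^{n1×n2×n3} has CP rank r, i.e., X = [[A,B,C]] for matrices A in R^{n1×r}, B in R^{n2×r}, C in R^{n3×r}, then X has a triple decomposition of size r; consequently TriRank(X) ≤ CPRank(X). -/
open Matrix

lemma cp_to_triple {n1 n2 n3 r : ℕ} (A : Fin n1 → Fin r → ℝ) (B : Fin n2 → Fin r → ℝ)
    (C : Fin n3 → Fin r → ℝ) :
    (fun i j t => ∑ p : Fin r, A i p * B j p * C t p) =
      tripleProd (fun i p q => if p = q then A i p else 0)
        (fun s j q => if s = q then B j q else 0)
        (fun s p t => if s = p then C t p else 0) := by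
  funext i j t
  unfold tripleProd
  refine Finset.sum_congr rfl (fun p _ => ?_)
  simp only [ite_mul, mul_ite, zero_mul, mul_zero]
  rw [Finset.sum_eq_single p, Finset.sum_eq_single p] <;>
    simp +contextual [eq_comm]

theorem stmt2 {n1 n2 n3 r : ℕ} (A : Fin n1 → Fin r → ℝ) (B : Fin n2 → Fin r → ℝ)
    (C : Fin n3 → Fin r → ℝ) (X : Fin n1 → Fin n2 → Fin n3 → ℝ)
    (hX : X = fun i j t => ∑ p : Fin r, A i p * B j p * C t p) :
    (∃ (A' : Fin n1 → Fin r → Fin r → ℝ) (B' : Fin r → Fin n2 → Fin r → ℝ)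
      (C' : Fin r → Fin r → Fin n3 → ℝ), X = tripleProd A' B' C') ∧
    TriRank X ≤ CPRank X := by
  constructor
  · exact ⟨_, _, _, hX.trans (cp_to_triple A B C)⟩
  · apply csInf_le_csInf (OrderBot.bddBelow _)
    · exact ⟨r, A, B, C, hX⟩
    · rintro r' ⟨A', B', C', hX'⟩
      exact ⟨_, _, _, hX'.trans (cp_to_triple A' B' C')⟩
end

section
/- If a third order tensor X admits a triple decomposition with parameter r, then X can be written as a sum of r^3 rank-one tensors; hence CPRank(X) ≤ TriRank(X)^3. -/
open Matrix

lemma key {n1 n2 n3 r : ℕ} (A : Fin n1 → Fin r → Fin r → ℝ)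
    (B : Fin r → Fin n2 → Fin r → ℝ) (C : Fin r → Fin r → Fin n3 → ℝ) :
    ∃ (u : Fin (r ^ 3) → Fin n1 → ℝ) (v : Fin (r ^ 3) → Fin n2 → ℝ)
      (w : Fin (r ^ 3) → Fin n3 → ℝ),
      tripleProd A B C = fun i j t => ∑ m : Fin (r ^ 3), u m i * v m j * w m t := by
  have hcard : Fintype.card (Fin r × Fin r × Fin r) = r ^ 3 := by
    simp [pow_succ, mul_assoc]
  let e : Fin (r ^ 3) ≃ Fin r × Fin r × Fin r := (Fintype.equivFinOfCardEq hcard).symm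
  refine ⟨fun m i => A i (e m).2.1 (e m).2.2, fun m j => B (e m).1 j (e m).2.2,
    fun m t => C (e m).1 (e m).2.1 t, ?_⟩
  funext i j t
  rw [show (∑ m : Fin (r ^ 3), A i (e m).2.1 (e m).2.2 * B (e m).1 j (e m).2.2 *
      C (e m).1 (e m).2.1 t)
    = ∑ pqs : Fin r × Fin r × Fin r, A i pqs.2.1 pqs.2.2 * B pqs.1 j pqs.2.2 *
      C pqs.1 pqs.2.1 t from Fintype.sum_equiv e _ _ (fun m => rfl)]
  simp [tripleProd, Fintype.sum_prod_type]

theorem stmt3 {n1 n2 n3 r : ℕ} (A : Fin n1 → Fin r → Fin r → ℝ)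
    (B : Fin r → Fin n2 → Fin r → ℝ) (C : Fin r → Fin r → Fin n3 → ℝ)
    (X : Fin n1 → Fin n2 → Fin n3 → ℝ) (hX : X = tripleProd A B C) :
    (∃ (u : Fin (r ^ 3) → Fin n1 → ℝ) (v : Fin (r ^ 3) → Fin n2 → ℝ)
      (w : Fin (r ^ 3) → Fin n3 → ℝ),
      X = fun i j t => ∑ m : Fin (r ^ 3), u m i * v m j * w m t) ∧
    CPRank X ≤ TriRank X ^ 3 := by
  obtain ⟨u, v, w, huvw⟩ := key A B C
  rw [hX]
  refine ⟨⟨u, v, w, huvw⟩, ?_⟩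
  have hne : {r' : ℕ | ∃ (A : Fin n1 → Fin r' → Fin r' → ℝ)
      (B : Fin r' → Fin n2 → Fin r' → ℝ) (C : Fin r' → Fin r' → Fin n3 → ℝ),
      tripleProd A B C = tripleProd A B C}.Nonempty := ⟨r, A, B, C, rfl⟩
  have hmem : TriRank (tripleProd A B C) ∈ {r' : ℕ |
      ∃ (A' : Fin n1 → Fin r' → Fin r' → ℝ) (B' : Fin r' → Fin n2 → Fin r' → ℝ)
        (C' : Fin r' → Fin r' → Fin n3 → ℝ),
      tripleProd A B C = tripleProd A' B' C'} :=
    Nat.sInf_mem ⟨r, A, B, C, rfl⟩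
  obtain ⟨A', B', C', hABC⟩ := hmem
  obtain ⟨u', v', w', h'⟩ := key A' B' C'
  apply Nat.sInf_le
  exact ⟨fun i m => u' m i, fun j m => v' m j, fun t m => w' m t, by simpa using hABC.trans h'⟩
end

section
/- For any third order tensor X, TriRank(X) ≤ CPRank(X) ≤ TriRank(X)^3. -/
open Matrix

lemma cp_set_nonempty {n1 n2 n3 : ℕ} (X : Fin n1 → Fin n2 → Fin n3 → ℝ) :
    {r : ℕ | ∃ (A : Fin n1 → Fin r → ℝ) (B : Fin n2 → Fin r → ℝ) (C : Fin n3 → Fin r → ℝ),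
      X = fun i j t => ∑ p : Fin r, A i p * B j p * C t p}.Nonempty := by
  refine ⟨n2 * n3, fun i p => X i (finProdFinEquiv.symm p).1 (finProdFinEquiv.symm p).2,
    fun j p => if (finProdFinEquiv.symm p).1 = j then 1 else 0,
    fun t p => if (finProdFinEquiv.symm p).2 = t then 1 else 0, ?_⟩
  funext i j t
  rw [← Equiv.sum_comp (finProdFinEquiv : Fin n2 × Fin n3 ≃ Fin (n2 * n3))]
  simp [Fintype.sum_prod_type, mul_ite, mul_one, mul_zero, Finset.sum_ite_eq]

lemma tri_of_cp {n1 n2 n3 r : ℕ} (X : Fin n1 → Fin n2 → Fin n3 → ℝ)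
    (h : ∃ (A : Fin n1 → Fin r → ℝ) (B : Fin n2 → Fin r → ℝ) (C : Fin n3 → Fin r → ℝ),
      X = fun i j t => ∑ p : Fin r, A i p * B j p * C t p) :
    ∃ (A : Fin n1 → Fin r → Fin r → ℝ) (B : Fin r → Fin n2 → Fin r → ℝ)
      (C : Fin r → Fin r → Fin n3 → ℝ), X = tripleProd A B C := by
  obtain ⟨A, B, C, hX⟩ := h
  refine ⟨fun i q s => if q = s then A i q else 0,
    fun p j s => if p = s then B j p else 0,
    fun p q t => if p = q then C t p else 0, ?_⟩
  subst hX
  funext i j t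
  simp only [tripleProd, ite_mul, mul_ite, zero_mul, mul_zero]
  refine Finset.sum_congr rfl fun p _ => ?_
  symm
  simp [Finset.sum_ite_eq, Finset.sum_ite_eq']

lemma cp_of_tri {n1 n2 n3 r : ℕ} (X : Fin n1 → Fin n2 → Fin n3 → ℝ)
    (h : ∃ (A : Fin n1 → Fin r → Fin r → ℝ) (B : Fin r → Fin n2 → Fin r → ℝ)
      (C : Fin r → Fin r → Fin n3 → ℝ), X = tripleProd A B C) :
    ∃ (A : Fin n1 → Fin (r ^ 3) → ℝ) (B : Fin n2 → Fin (r ^ 3) → ℝ)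
      (C : Fin n3 → Fin (r ^ 3) → ℝ),
      X = fun i j t => ∑ p : Fin (r ^ 3), A i p * B j p * C t p := by
  obtain ⟨A, B, C, hX⟩ := h
  have e : Fin r × Fin r × Fin r ≃ Fin (r ^ 3) :=
    (Equiv.prodCongr (Equiv.refl (Fin r)) finProdFinEquiv).trans
      (finProdFinEquiv.trans (finCongr (by ring)))
  refine ⟨fun i π => A i (e.symm π).2.1 (e.symm π).2.2,
    fun j π => B (e.symm π).1 j (e.symm π).2.2,
    fun t π => C (e.symm π).1 (e.symm π).2.1 t, ?_⟩
  subst hX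
  funext i j t
  rw [show (∑ π : Fin (r ^ 3), A i (e.symm π).2.1 (e.symm π).2.2 *
      B (e.symm π).1 j (e.symm π).2.2 * C (e.symm π).1 (e.symm π).2.1 t) =
      ∑ x : Fin r × Fin r × Fin r, A i (e.symm (e x)).2.1 (e.symm (e x)).2.2 *
      B (e.symm (e x)).1 j (e.symm (e x)).2.2 * C (e.symm (e x)).1 (e.symm (e x)).2.1 t from
      (Equiv.sum_comp e _).symm]
  simp only [Equiv.symm_apply_apply]
  rw [Fintype.sum_prod_type]
  simp only [Fintype.sum_prod_type]
  rfl

theorem stmt4 {n1 n2 n3 : ℕ} (X : Fin n1 → Fin n2 → Fin n3 → ℝ) :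
    TriRank X ≤ CPRank X ∧ CPRank X ≤ TriRank X ^ 3 := by
  have hcp := cp_set_nonempty X
  have hcpmem := Nat.sInf_mem hcp
  have htri_ne : {r : ℕ | ∃ (A : Fin n1 → Fin r → Fin r → ℝ) (B : Fin r → Fin n2 → Fin r → ℝ)
      (C : Fin r → Fin r → Fin n3 → ℝ), X = tripleProd A B C}.Nonempty := by
    obtain ⟨r, hr⟩ := hcp
    exact ⟨r, tri_of_cp X hr⟩
  have htrimem := Nat.sInf_mem htri_ne
  constructor
  · exact Nat.sInf_le (tri_of_cp X hcpmem)
  · exact Nat.sInf_le (cp_of_tri X htrimem)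
end

section
/- If D = ĀB̄C̄ is a triple decomposition of the core tensor D in R^{r1×r2×r3} with parameter r, and X = D ×₁ U ×₂ V ×₃ W is a Tucker decomposition with factor matrices U in R^{n1×r1}, V in R^{n2×r2}, W in R^{n3×r3}, then X = (Ā ×₁ U)(B̄ ×₂ V)(C̄ ×₃ W) is a triple decomposition of X with the same parameter r; consequently TriRank(X) ≤ TriRank(D). -/
open Matrix

lemma sum_swap6 {a b c p q s : ℕ} (F : Fin a → Fin b → Fin c → Fin p → Fin q → Fin s → ℝ) :
    ∑ A, ∑ B, ∑ C, ∑ P, ∑ Q, ∑ S, F A B C P Q S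
      = ∑ P, ∑ Q, ∑ S, ∑ A, ∑ B, ∑ C, F A B C P Q S := by
  conv_lhs => enter [2,A,2,B]; rw [Finset.sum_comm]
  conv_lhs => enter [2,A]; rw [Finset.sum_comm]
  rw [Finset.sum_comm]
  conv_lhs => enter [2,P,2,A,2,B]; rw [Finset.sum_comm]
  conv_lhs => enter [2,P,2,A]; rw [Finset.sum_comm]
  conv_lhs => enter [2,P]; rw [Finset.sum_comm]
  conv_lhs => enter [2,P,2,Q,2,A,2,B]; rw [Finset.sum_comm]
  conv_lhs => enter [2,P,2,Q,2,A]; rw [Finset.sum_comm]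
  conv_lhs => enter [2,P,2,Q]; rw [Finset.sum_comm]


lemma sum_rev3 {a b c : ℕ} (F : Fin a → Fin b → Fin c → ℝ) :
    ∑ A, ∑ B, ∑ C, F A B C = ∑ C, ∑ B, ∑ A, F A B C := by
  conv_lhs => enter [2,A]; rw [Finset.sum_comm]
  rw [Finset.sum_comm]
  conv_lhs => enter [2,C]; rw [Finset.sum_comm]

lemma key_s5 {n1 n2 n3 r1 r2 r3 r : ℕ}
    (Ab : Fin r1 → Fin r → Fin r → ℝ) (Bb : Fin r → Fin r2 → Fin r → ℝ)
    (Cb : Fin r → Fin r → Fin r3 → ℝ)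
    (U : Matrix (Fin n1) (Fin r1) ℝ) (V : Matrix (Fin n2) (Fin r2) ℝ)
    (W : Matrix (Fin n3) (Fin r3) ℝ) :
    tucker U V W (tripleProd Ab Bb Cb)
      = tripleProd (mode1 U Ab) (mode2 V Bb) (mode3 W Cb) := by
  funext i j t
  simp only [tucker, tripleProd, mode1, mode2, mode3, Finset.mul_sum, Finset.sum_mul]
  refine Eq.trans (sum_swap6 _) ?_
  refine Finset.sum_congr rfl fun p _ => Finset.sum_congr rfl fun q _ => ?_
  refine Finset.sum_congr rfl fun s _ => ?_
  refine Eq.trans (sum_rev3 _) ?_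
  refine Finset.sum_congr rfl fun c _ => Finset.sum_congr rfl fun b _ => ?_
  refine Finset.sum_congr rfl fun a _ => ?_
  ring

theorem stmt5 {n1 n2 n3 r1 r2 r3 r : ℕ}
    (D : Fin r1 → Fin r2 → Fin r3 → ℝ)
    (Ab : Fin r1 → Fin r → Fin r → ℝ) (Bb : Fin r → Fin r2 → Fin r → ℝ)
    (Cb : Fin r → Fin r → Fin r3 → ℝ) (hD : D = tripleProd Ab Bb Cb)
    (U : Matrix (Fin n1) (Fin r1) ℝ) (V : Matrix (Fin n2) (Fin r2) ℝ)
    (W : Matrix (Fin n3) (Fin r3) ℝ)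
    (X : Fin n1 → Fin n2 → Fin n3 → ℝ) (hX : X = tucker U V W D) :
    X = tripleProd (mode1 U Ab) (mode2 V Bb) (mode3 W Cb) ∧ TriRank X ≤ TriRank D := by
  have h1 : X = tripleProd (mode1 U Ab) (mode2 V Bb) (mode3 W Cb) := by
    rw [hX, hD, key_s5]
  refine ⟨h1, ?_⟩
  apply csInf_le_csInf (OrderBot.bddBelow _)
  · exact ⟨r, Ab, Bb, Cb, hD⟩
  · rintro r' ⟨A', B', C', hD'⟩
    exact ⟨mode1 U A', mode2 V B', mode3 W C', by rw [hX, hD', key_s5]⟩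
end

section
/- If X = ABC is a triple product of A in R^{n1×R×R}, B in R^{R×n2×R}, C in R^{R×R×n3}, and X = D ×₁ U ×₂ V ×₃ W where U, V, W have full column rank, then D = (A ×₁ (UᵀU)⁻¹Uᵀ)(B ×₂ (VᵀV)⁻¹Vᵀ)(C ×₃ (WᵀW)⁻¹Wᵀ), so TriRank(D) ≤ TriRank(X). -/
open Matrix

section Helpers

lemma isUnit_of_rank_eq {r : ℕ} (M : Matrix (Fin r) (Fin r) ℝ) (h : M.rank = r) : IsUnit M := by
  rw [← Matrix.mulVec_surjective_iff_isUnit]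
  have : LinearMap.range M.mulVecLin = ⊤ := by
    apply Submodule.eq_top_of_finrank_eq
    simpa [Matrix.rank] using h
  intro y
  exact (LinearMap.range_eq_top.mp this) y

lemma pinv_mul {n r : ℕ} (U : Matrix (Fin n) (Fin r) ℝ) (h : U.rank = r) :
    ((Uᵀ * U)⁻¹ * Uᵀ) * U = 1 := by
  have hu : IsUnit (Uᵀ * U) := isUnit_of_rank_eq _ (by rw [Matrix.rank_transpose_mul_self, h])
  rw [Matrix.mul_assoc, Matrix.nonsing_inv_mul _ (Matrix.isUnit_iff_isUnit_det _ |>.mp hu)]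

lemma mode1_mode1 {m'' m' m n k : ℕ} (P : Matrix (Fin m'') (Fin m') ℝ)
    (U : Matrix (Fin m') (Fin m) ℝ) (D : Fin m → Fin n → Fin k → ℝ) :
    mode1 P (mode1 U D) = mode1 (P * U) D := by
  funext i j t
  simp only [mode1, Matrix.mul_apply, Finset.mul_sum, Finset.sum_mul]
  rw [Finset.sum_comm]
  simp [mul_assoc]

lemma mode2_mode2 {m n'' n' n k : ℕ} (P : Matrix (Fin n'') (Fin n') ℝ)
    (V : Matrix (Fin n') (Fin n) ℝ) (D : Fin m → Fin n → Fin k → ℝ) :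
    mode2 P (mode2 V D) = mode2 (P * V) D := by
  funext i j t
  simp only [mode2, Matrix.mul_apply, Finset.mul_sum, Finset.sum_mul]
  rw [Finset.sum_comm]
  simp [mul_assoc]

lemma mode3_mode3 {m n k'' k' k : ℕ} (P : Matrix (Fin k'') (Fin k') ℝ)
    (W : Matrix (Fin k') (Fin k) ℝ) (D : Fin m → Fin n → Fin k → ℝ) :
    mode3 P (mode3 W D) = mode3 (P * W) D := by
  funext i j t
  simp only [mode3, Matrix.mul_apply, Finset.mul_sum, Finset.sum_mul]
  rw [Finset.sum_comm]
  simp [mul_assoc]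

lemma mode1_one {m n k : ℕ} (D : Fin m → Fin n → Fin k → ℝ) : mode1 1 D = D := by
  funext i j t; simp [mode1, Matrix.one_apply]

lemma mode2_one {m n k : ℕ} (D : Fin m → Fin n → Fin k → ℝ) : mode2 1 D = D := by
  funext i j t; simp [mode2, Matrix.one_apply]

lemma mode3_one {m n k : ℕ} (D : Fin m → Fin n → Fin k → ℝ) : mode3 1 D = D := by
  funext i j t; simp [mode3, Matrix.one_apply]

lemma mode1_mode2_comm {m' m n' n k : ℕ} (P : Matrix (Fin m') (Fin m) ℝ)
    (V : Matrix (Fin n') (Fin n) ℝ) (D : Fin m → Fin n → Fin k → ℝ) :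
    mode1 P (mode2 V D) = mode2 V (mode1 P D) := by
  funext i j t
  simp only [mode1, mode2, Finset.mul_sum]
  rw [Finset.sum_comm]
  congr 1; funext q; congr 1; funext p; ring

lemma mode1_mode3_comm {m' m n k' k : ℕ} (P : Matrix (Fin m') (Fin m) ℝ)
    (W : Matrix (Fin k') (Fin k) ℝ) (D : Fin m → Fin n → Fin k → ℝ) :
    mode1 P (mode3 W D) = mode3 W (mode1 P D) := by
  funext i j t
  simp only [mode1, mode3, Finset.mul_sum]
  rw [Finset.sum_comm]
  congr 1; funext q; congr 1; funext p; ring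

lemma mode2_mode3_comm {m n' n k' k : ℕ} (V : Matrix (Fin n') (Fin n) ℝ)
    (W : Matrix (Fin k') (Fin k) ℝ) (D : Fin m → Fin n → Fin k → ℝ) :
    mode2 V (mode3 W D) = mode3 W (mode2 V D) := by
  funext i j t
  simp only [mode2, mode3, Finset.mul_sum]
  rw [Finset.sum_comm]
  congr 1; funext q; congr 1; funext p; ring

lemma mode1_tri {n1' n1 n2 n3 R : ℕ} (P : Matrix (Fin n1') (Fin n1) ℝ)
    (A : Fin n1 → Fin R → Fin R → ℝ) (B : Fin R → Fin n2 → Fin R → ℝ)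
    (C : Fin R → Fin R → Fin n3 → ℝ) :
    mode1 P (tripleProd A B C) = tripleProd (mode1 P A) B C := by
  funext i j t
  simp only [mode1, tripleProd, Finset.mul_sum, Finset.sum_mul]
  rw [Finset.sum_comm]
  congr 1; funext p
  rw [Finset.sum_comm]
  congr 1; funext q
  rw [Finset.sum_comm]
  congr 1; funext s; congr 1; funext a; ring

lemma mode2_tri {n1 n2' n2 n3 R : ℕ} (Q : Matrix (Fin n2') (Fin n2) ℝ)
    (A : Fin n1 → Fin R → Fin R → ℝ) (B : Fin R → Fin n2 → Fin R → ℝ)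
    (C : Fin R → Fin R → Fin n3 → ℝ) :
    mode2 Q (tripleProd A B C) = tripleProd A (mode2 Q B) C := by
  funext i j t
  simp only [mode2, tripleProd, Finset.mul_sum, Finset.sum_mul]
  rw [Finset.sum_comm]
  congr 1; funext p
  rw [Finset.sum_comm]
  congr 1; funext q
  rw [Finset.sum_comm]
  congr 1; funext s; congr 1; funext a; ring

lemma mode3_tri {n1 n2 n3' n3 R : ℕ} (Rw : Matrix (Fin n3') (Fin n3) ℝ)
    (A : Fin n1 → Fin R → Fin R → ℝ) (B : Fin R → Fin n2 → Fin R → ℝ)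
    (C : Fin R → Fin R → Fin n3 → ℝ) :
    mode3 Rw (tripleProd A B C) = tripleProd A B (mode3 Rw C) := by
  funext i j t
  simp only [mode3, tripleProd, Finset.mul_sum, Finset.sum_mul]
  rw [Finset.sum_comm]
  congr 1; funext p
  rw [Finset.sum_comm]
  congr 1; funext q
  rw [Finset.sum_comm]
  congr 1; funext s; congr 1; funext a; ring

lemma tucker_tucker_eq {n1 n2 n3 r1 r2 r3 : ℕ}
    (U : Matrix (Fin n1) (Fin r1) ℝ) (V : Matrix (Fin n2) (Fin r2) ℝ)
    (W : Matrix (Fin n3) (Fin r3) ℝ)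
    (P : Matrix (Fin r1) (Fin n1) ℝ) (Q : Matrix (Fin r2) (Fin n2) ℝ)
    (Rw : Matrix (Fin r3) (Fin n3) ℝ)
    (hP : P * U = 1) (hQ : Q * V = 1) (hR : Rw * W = 1)
    (D : Fin r1 → Fin r2 → Fin r3 → ℝ) :
    tucker P Q Rw (tucker U V W D) = D := by
  unfold tucker
  rw [← mode1_mode3_comm, ← mode1_mode2_comm, mode1_mode1, hP, mode1_one,
    ← mode2_mode3_comm, mode2_mode2, hQ, mode2_one, mode3_mode3, hR, mode3_one]

end Helpers

theorem stmt6 {n1 n2 n3 r1 r2 r3 R : ℕ}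
    (A : Fin n1 → Fin R → Fin R → ℝ) (B : Fin R → Fin n2 → Fin R → ℝ)
    (C : Fin R → Fin R → Fin n3 → ℝ)
    (X : Fin n1 → Fin n2 → Fin n3 → ℝ) (hX : X = tripleProd A B C)
    (U : Matrix (Fin n1) (Fin r1) ℝ) (V : Matrix (Fin n2) (Fin r2) ℝ)
    (W : Matrix (Fin n3) (Fin r3) ℝ)
    (D : Fin r1 → Fin r2 → Fin r3 → ℝ) (hT : X = tucker U V W D)
    (hU : U.rank = r1) (hV : V.rank = r2) (hW : W.rank = r3) :
    D = tripleProd (mode1 ((Uᵀ * U)⁻¹ * Uᵀ) A) (mode2 ((Vᵀ * V)⁻¹ * Vᵀ) B)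
        (mode3 ((Wᵀ * W)⁻¹ * Wᵀ) C) ∧ TriRank D ≤ TriRank X := by
  set P := (Uᵀ * U)⁻¹ * Uᵀ
  set Q := (Vᵀ * V)⁻¹ * Vᵀ
  set Rw := (Wᵀ * W)⁻¹ * Wᵀ
  have hP : P * U = 1 := pinv_mul U hU
  have hQ : Q * V = 1 := pinv_mul V hV
  have hR : Rw * W = 1 := pinv_mul W hW
  have hD : D = tucker P Q Rw X := by
    rw [hT, tucker_tucker_eq U V W P Q Rw hP hQ hR]
  have key : ∀ {R' : ℕ} (A' : Fin n1 → Fin R' → Fin R' → ℝ)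
      (B' : Fin R' → Fin n2 → Fin R' → ℝ) (C' : Fin R' → Fin R' → Fin n3 → ℝ),
      X = tripleProd A' B' C' →
      D = tripleProd (mode1 P A') (mode2 Q B') (mode3 Rw C') := by
    intro R' A' B' C' h
    rw [hD, h]
    unfold tucker
    rw [mode3_tri, mode2_tri, mode1_tri]
  constructor
  · exact key A B C hX
  · have hne : (TriRank X) ∈ {r : ℕ | ∃ (A : Fin n1 → Fin r → Fin r → ℝ)
        (B : Fin r → Fin n2 → Fin r → ℝ) (C : Fin r → Fin r → Fin n3 → ℝ),
        X = tripleProd A B C} :=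
      Nat.sInf_mem ⟨R, A, B, C, hX⟩
    obtain ⟨A', B', C', h⟩ := hne
    exact Nat.sInf_le ⟨mode1 P A', mode2 Q B', mode3 Rw C', key A' B' C' h⟩
end

section
/- If X = ABC with A in R^{n1×r×r}, B in R^{r×n2×r}, C in R^{r×r×n3}, and A = F ×₁ Ã, B = G ×₂ B̃, C = H ×₃ C̃ for core tensors F in R^{r1×r×r}, G in R^{r×r2×r}, H in R^{r×r×r3} and matrices Ã in R^{n1×r1}, B̃ in R^{n2×r2}, C̃ in R^{n3×r3}, then X = (FGH) ×₁ Ã ×₂ B̃ ×₃ C̃, where FGH denotes the triple product of F, G, H. That is, a triple decomposition of structured factors yields a Tucker decomposition with core FGH. -/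
open Matrix

lemma reorder6 {ι1 ι2 ι3 ι4 ι5 ι6 : Type*} [Fintype ι1] [Fintype ι2] [Fintype ι3]
    [Fintype ι4] [Fintype ι5] [Fintype ι6] (f : ι1 → ι2 → ι3 → ι4 → ι5 → ι6 → ℝ) :
    (∑ p, ∑ q, ∑ s, ∑ w, ∑ v, ∑ u, f p q s w v u)
      = ∑ u, ∑ v, ∑ w, ∑ p, ∑ q, ∑ s, f p q s w v u := by
  calc (∑ p, ∑ q, ∑ s, ∑ w, ∑ v, ∑ u, f p q s w v u)
      = ∑ x : ι1 × ι2 × ι3 × ι4 × ι5 × ι6,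
          f x.1 x.2.1 x.2.2.1 x.2.2.2.1 x.2.2.2.2.1 x.2.2.2.2.2 := by
        simp [Fintype.sum_prod_type]
    _ = ∑ y : ι6 × ι5 × ι4 × ι1 × ι2 × ι3,
          f y.2.2.2.1 y.2.2.2.2.1 y.2.2.2.2.2 y.2.2.1 y.2.1 y.1 :=
        Fintype.sum_equiv
          ⟨fun x => (x.2.2.2.2.2, x.2.2.2.2.1, x.2.2.2.1, x.1, x.2.1, x.2.2.1),
           fun y => (y.2.2.2.1, y.2.2.2.2.1, y.2.2.2.2.2, y.2.2.1, y.2.1, y.1),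
           fun x => rfl, fun y => rfl⟩ _ _ (fun x => rfl)
    _ = ∑ u, ∑ v, ∑ w, ∑ p, ∑ q, ∑ s, f p q s w v u := by
        simp [Fintype.sum_prod_type]

theorem stmt9 {n1 n2 n3 r r1 r2 r3 : ℕ}
    (F : Fin r1 → Fin r → Fin r → ℝ) (G : Fin r → Fin r2 → Fin r → ℝ)
    (H : Fin r → Fin r → Fin r3 → ℝ)
    (At : Matrix (Fin n1) (Fin r1) ℝ) (Bt : Matrix (Fin n2) (Fin r2) ℝ)
    (Ct : Matrix (Fin n3) (Fin r3) ℝ)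
    (A : Fin n1 → Fin r → Fin r → ℝ) (B : Fin r → Fin n2 → Fin r → ℝ)
    (C : Fin r → Fin r → Fin n3 → ℝ)
    (hA : A = mode1 At F) (hB : B = mode2 Bt G) (hC : C = mode3 Ct H)
    (X : Fin n1 → Fin n2 → Fin n3 → ℝ) (hX : X = tripleProd A B C) :
    X = tucker At Bt Ct (tripleProd F G H) := by
  subst hA hB hC hX
  funext i j t
  simp only [tripleProd, tucker, mode1, mode2, mode3, Finset.mul_sum, Finset.sum_mul]
  rw [reorder6]
  repeat' refine Finset.sum_congr rfl fun _ _ => ?_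
  ring
end

section
/- For any third order tensor A in R^{n1×r×r} with TriRank(A) = r̄, the rank of its mode-1 unfolding satisfies TucRank(A)₁ ≤ r̄²; consequently, if X = ABC is a triple decomposition of X with r = TriRank(X), then TucRank(X)₁ ≤ TriRank(X)². -/
open Matrix

/-!
If `X = tripleProd A B C` with inner size `r`, the mode-1 unfolding of `X` factors through
`ℝ^(r × r)`: it is the unfolding of `A` times an `r² × (n2 n3)` matrix built from `B` and `C`, so
its rank is at most `r²`. The infimum defining `TriRank X` is attained, because every tensor has a
triple decomposition of inner size `n2 n3`.
-/

lemma exists_eq_tripleProd {n1 n2 n3 : ℕ} (X : Fin n1 → Fin n2 → Fin n3 → ℝ) :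
    ∃ (A : Fin n1 → Fin (n2 * n3) → Fin (n2 * n3) → ℝ)
      (B : Fin (n2 * n3) → Fin n2 → Fin (n2 * n3) → ℝ)
      (C : Fin (n2 * n3) → Fin (n2 * n3) → Fin n3 → ℝ), X = tripleProd A B C := by
  classical
  let e : Fin (n2 * n3) ≃ Fin n2 × Fin n3 := finProdFinEquiv.symm
  -- all three inner indices are forced onto the diagonal, which enumerates the pairs `(j, t)`
  refine ⟨fun i q s => if q = s then X i (e s).1 (e s).2 else 0,
    fun p j s => if s = p ∧ (e s).1 = j then 1 else 0,
    fun p q t => if q = p ∧ (e p).2 = t then 1 else 0, ?_⟩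
  funext i j t
  simp only [tripleProd, ite_and, mul_ite, mul_one, mul_zero, Finset.sum_ite_eq',
    Finset.sum_ite_irrel, Finset.sum_const_zero, Finset.mem_univ, if_true]
  rw [e.sum_comp fun jt => if jt.2 = t then if jt.1 = j then X i jt.1 jt.2 else 0 else 0,
    Fintype.sum_prod_type]
  simp

lemma exists_eq_tripleProd_triRank {n1 n2 n3 : ℕ} (X : Fin n1 → Fin n2 → Fin n3 → ℝ) :
    ∃ (A : Fin n1 → Fin (TriRank X) → Fin (TriRank X) → ℝ)
      (B : Fin (TriRank X) → Fin n2 → Fin (TriRank X) → ℝ)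
      (C : Fin (TriRank X) → Fin (TriRank X) → Fin n3 → ℝ), X = tripleProd A B C :=
  Nat.sInf_mem (s := {r | ∃ (A : Fin n1 → Fin r → Fin r → ℝ) (B : Fin r → Fin n2 → Fin r → ℝ)
    (C : Fin r → Fin r → Fin n3 → ℝ), X = tripleProd A B C}) ⟨_, exists_eq_tripleProd X⟩

lemma unfold1_tripleProd {n1 n2 n3 r : ℕ} (A : Fin n1 → Fin r → Fin r → ℝ)
    (B : Fin r → Fin n2 → Fin r → ℝ) (C : Fin r → Fin r → Fin n3 → ℝ) :
    unfold1 (tripleProd A B C) = unfold1 A *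
      of fun (qs : Fin r × Fin r) (jt : Fin n2 × Fin n3) => ∑ p, B p jt.1 qs.2 * C p qs.1 jt.2 := by
  ext i jt
  simp only [unfold1, tripleProd, mul_apply, of_apply, Fintype.sum_prod_type, Finset.mul_sum]
  rw [Finset.sum_comm]
  refine Finset.sum_congr rfl fun q _ => ?_
  rw [Finset.sum_comm]
  refine Finset.sum_congr rfl fun s _ => Finset.sum_congr rfl fun p _ => ?_
  ring

lemma rank_unfold1_tripleProd_le {n1 n2 n3 r : ℕ} (A : Fin n1 → Fin r → Fin r → ℝ)
    (B : Fin r → Fin n2 → Fin r → ℝ) (C : Fin r → Fin r → Fin n3 → ℝ) :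
    (unfold1 (tripleProd A B C)).rank ≤ r ^ 2 := by
  rw [unfold1_tripleProd]
  calc _ ≤ (unfold1 A).rank := rank_mul_le_left _ _
    _ ≤ Fintype.card (Fin r × Fin r) := rank_le_card_width _
    _ = r ^ 2 := by simp [sq]

lemma rank_unfold1_le_triRank_sq {n1 n2 n3 : ℕ} (X : Fin n1 → Fin n2 → Fin n3 → ℝ) :
    (unfold1 X).rank ≤ TriRank X ^ 2 := by
  obtain ⟨A, B, C, hX⟩ := exists_eq_tripleProd_triRank X
  conv_lhs => rw [hX]
  exact rank_unfold1_tripleProd_le A B C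

theorem stmt11 :
    (∀ (n1 m k rb : ℕ) (A : Fin n1 → Fin m → Fin k → ℝ), TriRank A = rb →
      (unfold1 A).rank ≤ rb ^ 2) ∧
    (∀ (n1 n2 n3 r : ℕ) (X : Fin n1 → Fin n2 → Fin n3 → ℝ)
      (A : Fin n1 → Fin r → Fin r → ℝ) (B : Fin r → Fin n2 → Fin r → ℝ)
      (C : Fin r → Fin r → Fin n3 → ℝ), r = TriRank X → X = tripleProd A B C →
      (unfold1 X).rank ≤ TriRank X ^ 2) :=
  ⟨fun _ _ _ _ A hA => hA ▸ rank_unfold1_le_triRank_sq A,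
    fun _ _ _ _ X _ _ _ _ _ => rank_unfold1_le_triRank_sq X⟩
end

section
/- One MALS step on the A-block decreases the objective: let f(A) = ‖AF − X‖_F² for fixed F in R^{m×k}, X in R^{n×k}, let λ > 0, γ in [1,2), and let Ã = (XFᵀ + λA₀)(FFᵀ + λI)⁻¹ and A₁ = γà + (1−γ)A₀. Then f(A₀) − f(A₁) ≥ (2λ/γ)‖A₁ − A₀‖_F². -/
open Matrix

private lemma ipmul {n m k : ℕ} (A : Matrix (Fin n) (Fin m) ℝ) (F : Matrix (Fin m) (Fin k) ℝ)
    (B : Matrix (Fin n) (Fin k) ℝ) :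
    ∑ i, ∑ j, (A * F) i j * B i j = ∑ i, ∑ p, A i p * (B * Fᵀ) i p := by
  simp only [Matrix.mul_apply, Matrix.transpose_apply, Finset.sum_mul, Finset.mul_sum]
  refine Finset.sum_congr rfl fun i _ => ?_
  rw [Finset.sum_comm]
  exact Finset.sum_congr rfl fun p _ => Finset.sum_congr rfl fun j _ => by ring

private lemma sq_expand {I J : Type*} [Fintype I] [Fintype J]
    (P Q : Matrix I J ℝ) (c : ℝ) :
    ∑ i, ∑ j, ((P + c • Q) i j) ^ 2 =
      (∑ i, ∑ j, (P i j) ^ 2) + 2 * c * (∑ i, ∑ j, P i j * Q i j)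
        + c ^ 2 * (∑ i, ∑ j, (Q i j) ^ 2) := by
  have h : ∀ i j, ((P + c • Q) i j) ^ 2
      = (P i j) ^ 2 + 2 * c * (P i j * Q i j) + c ^ 2 * (Q i j) ^ 2 := fun i j => by
    simp [Matrix.add_apply, Matrix.smul_apply, smul_eq_mul]; ring
  simp_rw [h, Finset.sum_add_distrib, ← Finset.mul_sum]

theorem stmt18 {n m k : ℕ} (F : Matrix (Fin m) (Fin k) ℝ) (X : Matrix (Fin n) (Fin k) ℝ)
    (A0 : Matrix (Fin n) (Fin m) ℝ) (lam γ : ℝ) (hlam : 0 < lam)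
    (hγ1 : 1 ≤ γ) (hγ2 : γ < 2) :
    let f : Matrix (Fin n) (Fin m) ℝ → ℝ := fun A => ∑ i, ∑ j, ((A * F - X) i j) ^ 2
    let At := (X * Fᵀ + lam • A0) * (F * Fᵀ + lam • (1 : Matrix (Fin m) (Fin m) ℝ))⁻¹
    let A1 := γ • At + (1 - γ) • A0
    f A0 - f A1 ≥ (2 * lam / γ) * ∑ i, ∑ j, ((A1 - A0) i j) ^ 2 := by
  intro f At A1
  have hγ0 : (0:ℝ) < γ := lt_of_lt_of_le one_pos hγ1
  set M : Matrix (Fin m) (Fin m) ℝ := F * Fᵀ + lam • 1 with hMdef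
  -- invertibility of M
  have hMpd : M.PosDef := by
    have h1 : (F * Fᵀ).PosSemidef := by
      have := Matrix.posSemidef_self_mul_conjTranspose F
      rwa [Matrix.conjTranspose_eq_transpose_of_trivial] at this
    have h2 : (lam • (1 : Matrix (Fin m) (Fin m) ℝ)).PosDef := by
      rw [Matrix.smul_one_eq_diagonal]
      exact Matrix.posDef_diagonal_iff.mpr fun _ => hlam
    exact Matrix.PosDef.posSemidef_add h1 h2
  have hdet : IsUnit M.det := (Matrix.isUnit_iff_isUnit_det M).1 hMpd.isUnit
  have hAtM : At * M = X * Fᵀ + lam • A0 := by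
    show (X * Fᵀ + lam • A0) * M⁻¹ * M = _
    rw [Matrix.mul_assoc, Matrix.nonsing_inv_mul _ hdet, Matrix.mul_one]
  set D : Matrix (Fin n) (Fin m) ℝ := At - A0 with hDdef
  have hAt : At * (F * Fᵀ) + lam • At = X * Fᵀ + lam • A0 := by
    rw [← hAtM, hMdef, Matrix.mul_add, Matrix.mul_smul, Matrix.mul_one]
  -- key identity : (A0*F - X)*Fᵀ = -((D*F)*Fᵀ) - lam • D
  have key : (A0 * F - X) * Fᵀ = -(D * F * Fᵀ) - lam • D := by
    have hX : X * Fᵀ = At * (F * Fᵀ) + lam • At - lam • A0 := by rw [hAt]; abel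
    rw [Matrix.sub_mul, hX, hDdef]
    simp only [Matrix.sub_mul, Matrix.mul_assoc, smul_sub]
    abel
  -- expressions
  have hE : ∀ B : Matrix (Fin n) (Fin m) ℝ, B * F - X = (A0 * F - X) + (B - A0) * F := by
    intro B; rw [Matrix.sub_mul]; abel
  set E : Matrix (Fin n) (Fin k) ℝ := A0 * F - X with hEdef
  have hA1 : A1 - A0 = γ • D := by
    show γ • At + (1 - γ) • A0 - A0 = γ • (At - A0)
    module
  have hA1F : A1 * F - X = E + γ • (D * F) := by
    rw [hE A1, hA1, Matrix.smul_mul]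
  -- sums
  set sD := ∑ i, ∑ j, (D i j) ^ 2 with hsD
  set sDF := ∑ i, ∑ j, ((D * F) i j) ^ 2 with hsDF
  have hsD0 : 0 ≤ sD := Finset.sum_nonneg fun i _ => Finset.sum_nonneg fun j _ => sq_nonneg _
  have hsDF0 : 0 ≤ sDF := Finset.sum_nonneg fun i _ => Finset.sum_nonneg fun j _ => sq_nonneg _
  have hip : ∑ i, ∑ j, E i j * (D * F) i j = -sDF - lam * sD := by
    have h1 : ∑ i, ∑ j, E i j * (D * F) i j = ∑ i, ∑ j, (D * F) i j * E i j := by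
      exact Finset.sum_congr rfl fun i _ => Finset.sum_congr rfl fun j _ => mul_comm _ _
    rw [h1, ipmul D F E, key]
    have h2 : ∑ i, ∑ p, D i p * (D * F * Fᵀ) i p = sDF := by
      rw [← ipmul D F (D * F), hsDF]
      exact Finset.sum_congr rfl fun i _ => Finset.sum_congr rfl fun j _ => (sq ((D*F) i j)).symm
    calc ∑ i, ∑ p, D i p * (-(D * F * Fᵀ) - lam • D) i p
        = ∑ i, ∑ p, (-(D i p * (D * F * Fᵀ) i p) - lam * (D i p)^2) := by
          refine Finset.sum_congr rfl fun i _ => Finset.sum_congr rfl fun p _ => ?_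
          simp only [Matrix.sub_apply, Matrix.neg_apply, Matrix.smul_apply, smul_eq_mul]
          ring
      _ = -(∑ i, ∑ p, D i p * (D * F * Fᵀ) i p) - lam * sD := by
          rw [hsD]
          simp_rw [Finset.sum_sub_distrib, Finset.sum_neg_distrib, ← Finset.mul_sum]
      _ = -sDF - lam * sD := by rw [h2]
  -- compute f A0 and f A1
  have hfA0 : f A0 = ∑ i, ∑ j, (E i j) ^ 2 := rfl
  have hfA1 : f A1 = (∑ i, ∑ j, (E i j) ^ 2) + 2 * γ * (-sDF - lam * sD) + γ ^ 2 * sDF := by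
    show ∑ i, ∑ j, ((A1 * F - X) i j) ^ 2 = _
    rw [hA1F, sq_expand E (D * F) γ, hip, hsDF]
  have hRHS : ∑ i, ∑ j, ((A1 - A0) i j) ^ 2 = γ ^ 2 * sD := by
    rw [hsD, Finset.mul_sum]
    refine Finset.sum_congr rfl fun i _ => ?_
    rw [Finset.mul_sum]
    refine Finset.sum_congr rfl fun j _ => ?_
    rw [hA1]
    simp [Matrix.smul_apply, smul_eq_mul]
    ring
  rw [ge_iff_le, hfA0, hfA1, hRHS]
  have hγne : γ ≠ 0 := ne_of_gt hγ0
  have hdiv : 2 * lam / γ * (γ ^ 2 * sD) = 2 * lam * γ * sD := by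
    field_simp
  rw [hdiv]
  nlinarith [mul_nonneg (mul_nonneg hγ0.le (sub_pos.mpr hγ2).le) hsDF0]
end
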